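/- arXiv:1904.03840 — 6 statements merged into one kernel-verified Lean document; each statement's English description precedes it below -/
import Mathlib

section
/- Let (V, L) be a pairwise balanced design and M = (V, H) the corresponding rank-3 matroid with H = P_{≤2}(V) ∪ {X ∈ P_3(V) : X is not contained in any block of L}. Then a subset X of V lies in ε(M) = {X ⊆ V : for all independent Y ⊆ X with |Y| ≤ 2 and all p ∈ V \ X, Y ∪ {p} ∈ H} if and only if X is a subsystem of (V, L), i.e., for every pair of distinct points x, y ∈ X the unique block containing x and y is contained in X. -/
/-!
For independent `Y = {x, y} ⊆ X` and `p ∉ X`, the triple `{x, y, p}` is independent exactly when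
no block through `x` and `y` contains `p`. So the closure condition defining `ε(M)` says that every
block through two points of `X` stays inside `X`; independent sets of size at most one impose
nothing, since adding a point to them leaves a set of size at most two.
-/

section

variable {V : Type*}

def pbdIndep (L : Set (Set V)) : Set (Set V) :=
  {X | X.ncard ≤ 2 ∨ (X.ncard = 3 ∧ ∀ B ∈ L, ¬X ⊆ B)}

lemma union_singleton_mem_pbdIndep_of_ncard_lt_two (L : Set (Set V)) {Y : Set V}
    (hY : Y.ncard < 2) (p : V) : Y ∪ {p} ∈ pbdIndep L :=
  Or.inl <| calc (Y ∪ {p}).ncard ≤ Y.ncard + ({p} : Set V).ncard := Set.ncard_union_le _ _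
    _ ≤ 2 := by rw [Set.ncard_singleton]; omega

lemma pair_union_singleton_mem_pbdIndep_iff (L : Set (Set V)) {x y p : V} (hxy : x ≠ y)
    (hxp : x ≠ p) (hyp : y ≠ p) :
    {x, y} ∪ {p} ∈ pbdIndep L ↔ ∀ B ∈ L, x ∈ B → y ∈ B → p ∉ B := by
  have hcard : ({p, x, y} : Set V).ncard = 3 := by
    rw [Set.ncard_insert_of_notMem (by simp [hxp.symm, hyp.symm]), Set.ncard_pair hxy]
  simp only [pbdIndep, Set.mem_ofPred_eq, Set.union_singleton, hcard, Set.insert_subset_iff,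
    Set.singleton_subset_iff]
  constructor
  · rintro (h | ⟨-, h⟩)
    · omega
    · exact fun B hB hxB hyB hpB => h B hB ⟨hpB, hxB, hyB⟩
  · exact fun h => Or.inr ⟨trivial, fun B hB ⟨hpB, hxB, hyB⟩ => h B hB hxB hyB hpB⟩

end

theorem stmt3_general {V : Type*} (L : Set (Set V)) :
    let H : Set (Set V) :=
      {X | X.ncard ≤ 2 ∨ (X.ncard = 3 ∧ ∀ B ∈ L, ¬X ⊆ B)}
    ∀ X : Set V,
      -- X belongs to ε(M)
      (∀ Y ∈ H, Y ⊆ X → Y.ncard ≤ 2 → ∀ p ∉ X, Y ∪ {p} ∈ H) ↔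
      -- iff X is a subsystem of (V, L)
      (∀ x ∈ X, ∀ y ∈ X, x ≠ y → ∀ B ∈ L, x ∈ B → y ∈ B → B ⊆ X) := by
  intro H X
  show (∀ Y ∈ pbdIndep L, Y ⊆ X → Y.ncard ≤ 2 → ∀ p ∉ X, Y ∪ {p} ∈ pbdIndep L) ↔ _
  constructor
  · intro hε x hx y hy hxy B hB hxB hyB p hpB
    by_contra hpX
    have hpair : ({x, y} : Set V).ncard ≤ 2 := (Set.ncard_pair hxy).le
    have hindep := hε {x, y} (Or.inl hpair) (Set.pair_subset hx hy) hpair p hpX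
    rw [pair_union_singleton_mem_pbdIndep_iff L hxy (ne_of_mem_of_not_mem hx hpX)
      (ne_of_mem_of_not_mem hy hpX)] at hindep
    exact hindep B hB hxB hyB hpB
  · intro hsub Y _ hYX hY2 p hpX
    obtain hlt | h2 := hY2.lt_or_eq
    · exact union_singleton_mem_pbdIndep_of_ncard_lt_two L hlt p
    obtain ⟨x, y, hxy, rfl⟩ := Set.ncard_eq_two.mp h2
    have hx : x ∈ X := hYX (by simp)
    have hy : y ∈ X := hYX (by simp)
    rw [pair_union_singleton_mem_pbdIndep_iff L hxy (ne_of_mem_of_not_mem hx hpX)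
      (ne_of_mem_of_not_mem hy hpX)]
    exact fun B hB hxB hyB hpB => hpX (hsub x hx y hy hxy B hB hxB hyB hpB)

theorem stmt3 {V : Type*} [Fintype V] (L : Set (Set V))
    (hblocks : ∀ B ∈ L, 2 ≤ B.ncard)
    (hpair : ∀ x y : V, x ≠ y → ∃! B, B ∈ L ∧ x ∈ B ∧ y ∈ B) :
    let H : Set (Set V) :=
      {X | X.ncard ≤ 2 ∨ (X.ncard = 3 ∧ ∀ B ∈ L, ¬X ⊆ B)}
    ∀ X : Set V,
      -- X belongs to ε(M)
      (∀ Y ∈ H, Y ⊆ X → Y.ncard ≤ 2 → ∀ p ∉ X, Y ∪ {p} ∈ H) ↔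
      -- iff X is a subsystem of (V, L)
      (∀ x ∈ X, ∀ y ∈ X, x ≠ y → ∀ B ∈ L, x ∈ B → y ∈ B → B ⊆ X) :=
  stmt3_general L
end

section
/- Let S = (V, H) be a simplicial complex of rank r. The collection ε(S) = {X ⊆ V : for all Y ∈ H with Y ⊆ X and |Y| ≤ r − 1, and all p ∈ V \ X, Y ∪ {p} ∈ H} is closed under intersection, and every flat of S belongs to ε(S). -/
/-- A flat of a simplicial complex `(V, H)`. -/
def IsFlat {V : Type*} (H : Set (Set V)) (F : Set V) : Prop :=
  ∀ I ∈ H, I ⊆ F → ∀ p ∉ F, I ∪ {p} ∈ H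

/-- The paper's `ε(S)` is `{X | IsFlatUpTo H (r - 1) X}`. -/
def IsFlatUpTo {V : Type*} (H : Set (Set V)) (k : ℕ) (X : Set V) : Prop :=
  ∀ Y ∈ H, Y ⊆ X → Y.ncard ≤ k → ∀ p ∉ X, Y ∪ {p} ∈ H

section

variable {V : Type*} {H : Set (Set V)} {k : ℕ}

theorem IsFlatUpTo.inter {A B : Set V} (hA : IsFlatUpTo H k A) (hB : IsFlatUpTo H k B) :
    IsFlatUpTo H k (A ∩ B) := by
  intro Y hY hYAB hYk p hp
  rcases not_and_or.mp hp with hpA | hpB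
  · exact hA Y hY (hYAB.trans Set.inter_subset_left) hYk p hpA
  · exact hB Y hY (hYAB.trans Set.inter_subset_right) hYk p hpB

theorem IsFlat.isFlatUpTo {F : Set V} (hF : IsFlat H F) (k : ℕ) : IsFlatUpTo H k F :=
  fun Y hY hYF _ p hp => hF Y hY hYF p hp

end

theorem stmt4_general {V : Type*} (H : Set (Set V)) (r : ℕ) :
    let eps : Set (Set V) :=
      {X | ∀ Y ∈ H, Y ⊆ X → Y.ncard ≤ r - 1 → ∀ p ∉ X, Y ∪ {p} ∈ H}
    (∀ A ∈ eps, ∀ B ∈ eps, A ∩ B ∈ eps) ∧ (∀ F : Set V, IsFlat H F → F ∈ eps) :=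
  ⟨fun _ hA _ hB => IsFlatUpTo.inter hA hB, fun _ hF => hF.isFlatUpTo (r - 1)⟩

theorem stmt4 {V : Type*} [Fintype V] [Nonempty V] (H : Set (Set V)) (r : ℕ)
    (hne : H.Nonempty)
    (hdown : ∀ I ∈ H, ∀ J, J ⊆ I → J ∈ H)
    (hrank : (∃ I ∈ H, I.ncard = r) ∧ ∀ I ∈ H, I.ncard ≤ r) :
    let eps : Set (Set V) :=
      {X | ∀ Y ∈ H, Y ⊆ X → Y.ncard ≤ r - 1 → ∀ p ∉ X, Y ∪ {p} ∈ H}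
    (∀ A ∈ eps, ∀ B ∈ eps, A ∩ B ∈ eps) ∧ (∀ F : Set V, IsFlat H F → F ∈ eps) :=
  stmt4_general H r
end

section
/- Let X = (S, L) and Y = (T, L') be pairwise balanced designs. A partial function f : S → T is a Wilson morphism (i.e., f^{-w}(F) is a subsystem of X for every subsystem F of Y, where f^{-w}(B) is the union of the preimage of B with the set of points where f is undefined) if and only if the domain of f is an open subset of X and f^{-1}(O) is open in X for every open subset O of Y. -/
/-! Taking complements, the Wilson inverse image of `Oᶜ` is the complement of the ordinary
inverse image of `O`, and the Wilson inverse image of the subsystem `∅` is the complement of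
the domain. So the Wilson condition for `F = Oᶜ` is continuity at `O`, and for `F = ∅` it is
openness of the domain. -/

/-- A subsystem of a pairwise balanced design `(S, L)`. -/
def Subsys {S : Type*} (L : Set (Set S)) (X : Set S) : Prop :=
  ∀ x ∈ X, ∀ y ∈ X, x ≠ y → ∀ B ∈ L, x ∈ B → y ∈ B → B ⊆ X

/-- An open set of a PBD: the complement of a subsystem. -/
def IsOpenSet {S : Type*} (L : Set (Set S)) (O : Set S) : Prop :=
  Subsys L Oᶜ

/-- The domain of a partial function. -/
def pDom {S T : Type*} (f : S → Option T) : Set S := {x | f x ≠ none}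

/-- The image of a partial function. -/
def pIm {S T : Type*} (f : S → Option T) : Set T := {y | ∃ x, f x = some y}

/-- The (ordinary) inverse image of a set under a partial function. -/
def pPre {S T : Type*} (f : S → Option T) (O : Set T) : Set S :=
  {x | ∃ y ∈ O, f x = some y}

/-- Wilson inverse image: ordinary inverse image together with the co-domain. -/
def pWinv {S T : Type*} (f : S → Option T) (B : Set T) : Set S :=
  {x | ∀ y, f x = some y → y ∈ B}

/-- Composition of partial functions: first `f`, then `g`. -/
def pComp {S T U : Type*} (g : T → Option U) (f : S → Option T) : S → Option U :=
  fun x => (f x).bind g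

/-- Image of a set under a partial function. -/
def imOn {S T : Type*} (f : S → Option T) (B : Set S) : Set T :=
  {y | ∃ x ∈ B, f x = some y}

/-- A Wilson morphism between PBDs: a continuous partial function, i.e. one with
open domain such that inverse images of open sets are open. -/
def Morphism {S T : Type*} (LS : Set (Set S)) (LT : Set (Set T))
    (f : S → Option T) : Prop :=
  IsOpenSet LS (pDom f) ∧ ∀ O : Set T, IsOpenSet LT O → IsOpenSet LS (pPre f O)


theorem subsys_empty {S : Type*} (L : Set (Set S)) : Subsys L ∅ := by
  simp [Subsys]

theorem isOpenSet_compl_iff {S : Type*} (L : Set (Set S)) (X : Set S) :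
    IsOpenSet L Xᶜ ↔ Subsys L X := by
  rw [IsOpenSet, compl_compl]

theorem pWinv_compl {S T : Type*} (f : S → Option T) (O : Set T) :
    pWinv f Oᶜ = (pPre f O)ᶜ := by
  ext x
  simp only [pWinv, pPre, Set.mem_ofPred_eq, Set.mem_compl_iff, not_exists]
  tauto

theorem pWinv_empty {S T : Type*} (f : S → Option T) :
    pWinv f (∅ : Set T) = (pDom f)ᶜ := by
  ext x
  cases h : f x <;> simp [pWinv, pDom, h]

theorem stmt5_general {S T : Type*}
    (LS : Set (Set S)) (LT : Set (Set T))
    (f : S → Option T) :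
    (∀ F : Set T, Subsys LT F → Subsys LS (pWinv f F)) ↔ Morphism LS LT f := by
  constructor
  · intro hWilson
    refine ⟨?_, fun O hO => ?_⟩
    · rw [IsOpenSet, ← pWinv_empty]
      exact hWilson ∅ (subsys_empty LT)
    · rw [IsOpenSet, ← pWinv_compl]
      exact hWilson Oᶜ hO
  · rintro ⟨-, hPre⟩ F hF
    have hOpen := hPre Fᶜ ((isOpenSet_compl_iff LT F).mpr hF)
    rwa [IsOpenSet, ← pWinv_compl, compl_compl] at hOpen

theorem stmt5 {S T : Type*} [Fintype S] [Fintype T]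
    (LS : Set (Set S)) (LT : Set (Set T))
    (hbS : ∀ B ∈ LS, 2 ≤ B.ncard)
    (hpS : ∀ x y : S, x ≠ y → ∃! B, B ∈ LS ∧ x ∈ B ∧ y ∈ B)
    (hbT : ∀ B ∈ LT, 2 ≤ B.ncard)
    (hpT : ∀ x y : T, x ≠ y → ∃! B, B ∈ LT ∧ x ∈ B ∧ y ∈ B)
    (f : S → Option T) :
    (∀ F : Set T, Subsys LT F → Subsys LS (pWinv f F)) ↔ Morphism LS LT f :=
  stmt5_general LS LT f
end

section
/- Let X = (S, L) and Y = (T, L') be PBDs. A partial function f : S → T is a Wilson morphism if and only if the domain of f is open and for every block B ∈ L, either |f(B)| ≤ 1, or f is defined on all of B, is injective on B, and there is a block B' ∈ L' with f(B) ⊆ B'. -/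
open Set

section PartialMaps

variable {S T : Type*} {LS : Set (Set S)} {LT : Set (Set T)} {f : S → Option T}
  {B : Set S} {C : Set T}

theorem compl_pPre (f : S → Option T) (O : Set T) : (pPre f O)ᶜ = pWinv f Oᶜ := by
  ext x
  simp only [pPre, pWinv, mem_compl_iff, mem_ofPred_eq, not_exists, not_and]
  exact forall_congr' fun y => imp_not_comm

theorem isOpenSet_pPre_iff {O : Set T} :
    IsOpenSet LS (pPre f O) ↔ Subsys LS (pWinv f Oᶜ) := by
  rw [IsOpenSet, compl_pPre]

theorem imOn_subset_iff : imOn f B ⊆ C ↔ B ⊆ pWinv f C :=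
  ⟨fun h x hx _ hy => h ⟨x, hx, hy⟩, fun h _ ⟨_, hx, hy⟩ => h hx _ hy⟩

theorem mem_pWinv_of_eq_none {x : S} (h : f x = none) : x ∈ pWinv f C := by
  simp [pWinv, h]

theorem mem_pWinv_of_eq_some {x : S} {y : T} (h : f x = some y) : x ∈ pWinv f C ↔ y ∈ C := by
  simp [pWinv, h]

theorem mem_imOn {x : S} {y : T} (hx : x ∈ B) (h : f x = some y) : y ∈ imOn f B :=
  ⟨x, hx, h⟩

theorem Subsys.imOn_subset (hC : Subsys LS (pWinv f C)) (hB : B ∈ LS) {x₁ x₂ : S}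
    (hx₁ : x₁ ∈ B) (hx₂ : x₂ ∈ B) (hne : x₁ ≠ x₂) (h₁ : x₁ ∈ pWinv f C)
    (h₂ : x₂ ∈ pWinv f C) : imOn f B ⊆ C :=
  imOn_subset_iff.mpr (hC x₁ h₁ x₂ h₂ hne B hB hx₁ hx₂)

theorem subsys_singleton (L : Set (Set T)) (y : T) : Subsys L {y} :=
  fun _ ha _ hb hab => absurd (ha.trans hb.symm) hab

theorem subsys_of_mem (hp : ∀ x y : T, x ≠ y → ∃! B, B ∈ LT ∧ x ∈ B ∧ y ∈ B) {B' : Set T}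
    (hB' : B' ∈ LT) : Subsys LT B' := by
  intro a ha b hb hab D hD haD hbD
  obtain ⟨_, _, huniq⟩ := hp a b hab
  rw [huniq D ⟨hD, haD, hbD⟩, huniq B' ⟨hB', ha, hb⟩]

theorem Morphism.subsys_pWinv (hf : Morphism LS LT f) (hC : Subsys LT C) :
    Subsys LS (pWinv f C) := by
  simpa using isOpenSet_pPre_iff.mp (hf.2 Cᶜ (by simpa [IsOpenSet] using hC))

theorem Morphism.block_of_not_subsingleton
    (hp : ∀ x y : T, x ≠ y → ∃! B, B ∈ LT ∧ x ∈ B ∧ y ∈ B) (hf : Morphism LS LT f)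
    (hB : B ∈ LS) (hB_im : ¬ (imOn f B).Subsingleton) :
    B ⊆ pDom f ∧ InjOn f B ∧ ∃ B' ∈ LT, imOn f B ⊆ B' := by
  obtain ⟨y₁, ⟨x₁, hx₁, hfx₁⟩, y₂, ⟨x₂, hx₂, hfx₂⟩, hy⟩ : ∃ y₁ ∈ imOn f B, ∃ y₂ ∈ imOn f B,
      y₁ ≠ y₂ := by
    simpa [Set.Subsingleton] using hB_im
  have not_subset_singleton (y : T) : ¬ imOn f B ⊆ {y} := fun h =>
    hB_im (subsingleton_singleton.anti h)
  have hsingleton (y : T) : Subsys LS (pWinv f {y}) := hf.subsys_pWinv (subsys_singleton LT y)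
  have hdom : B ⊆ pDom f := by
    intro x hx hfx
    refine not_subset_singleton y₁ ((hsingleton y₁).imOn_subset hB hx hx₁ ?_
      (mem_pWinv_of_eq_none hfx) ((mem_pWinv_of_eq_some hfx₁).mpr rfl))
    rintro rfl
    simp [hfx] at hfx₁
  refine ⟨hdom, fun a ha b hb hab => ?_, ?_⟩
  · by_contra hne
    obtain ⟨w, hw⟩ := Option.ne_none_iff_exists'.mp (hdom ha)
    exact not_subset_singleton w ((hsingleton w).imOn_subset hB ha hb hne
      ((mem_pWinv_of_eq_some hw).mpr rfl) ((mem_pWinv_of_eq_some (hab ▸ hw)).mpr rfl))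
  · obtain ⟨B', ⟨hB', hy₁, hy₂⟩, -⟩ := hp y₁ y₂ hy
    have hx : x₁ ≠ x₂ := by
      rintro rfl
      exact hy (Option.some.inj (hfx₁.symm.trans hfx₂))
    exact ⟨B', hB', (hf.subsys_pWinv (subsys_of_mem hp hB')).imOn_subset hB hx₁ hx₂ hx
      ((mem_pWinv_of_eq_some hfx₁).mpr hy₁) ((mem_pWinv_of_eq_some hfx₂).mpr hy₂)⟩

theorem morphism_of_blocks (hdom : IsOpenSet LS (pDom f))
    (hblocks : ∀ B ∈ LS, (imOn f B).Subsingleton ∨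
      (B ⊆ pDom f ∧ InjOn f B ∧ ∃ B' ∈ LT, imOn f B ⊆ B')) :
    Morphism LS LT f := by
  refine ⟨hdom, fun O hO => isOpenSet_pPre_iff.mpr ?_⟩
  intro a ha b hb hab B hB haB hbB
  rw [← imOn_subset_iff]
  rcases hblocks B hB with hsub | ⟨hBdom, hinj, B', hB', himB'⟩
  · rcases ha_val : f a with _ | ya
    · rcases hb_val : f b with _ | yb
      · have hempty : B ⊆ (pDom f)ᶜ :=
          hdom a (by simpa [pDom]) b (by simpa [pDom]) hab B hB haB hbB
        rintro y ⟨x, hx, hxy⟩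
        exact absurd (hempty hx) (by simp [pDom, hxy])
      · exact fun y hy => (hsub hy (mem_imOn hbB hb_val)) ▸ (mem_pWinv_of_eq_some hb_val).mp hb
    · exact fun y hy => (hsub hy (mem_imOn haB ha_val)) ▸ (mem_pWinv_of_eq_some ha_val).mp ha
  · obtain ⟨ya, hya⟩ := Option.ne_none_iff_exists'.mp (hBdom haB)
    obtain ⟨yb, hyb⟩ := Option.ne_none_iff_exists'.mp (hBdom hbB)
    have hy : ya ≠ yb := fun h => hab (hinj haB hbB (hya.trans (h ▸ hyb.symm)))
    exact himB'.trans (hO ya ((mem_pWinv_of_eq_some hya).mp ha) yb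
      ((mem_pWinv_of_eq_some hyb).mp hb) hy B' hB' (himB' (mem_imOn haB hya))
      (himB' (mem_imOn hbB hyb)))

end PartialMaps

theorem stmt7_general {S T : Type*} [Fintype T]
    (LS : Set (Set S)) (LT : Set (Set T))
    (hpT : ∀ x y : T, x ≠ y → ∃! B, B ∈ LT ∧ x ∈ B ∧ y ∈ B)
    (f : S → Option T) :
    Morphism LS LT f ↔
      (IsOpenSet LS (pDom f) ∧
        ∀ B ∈ LS,
          (imOn f B).ncard ≤ 1 ∨
          (B ⊆ pDom f ∧ (∀ x ∈ B, ∀ y ∈ B, f x = f y → x = y) ∧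
            ∃ B' ∈ LT, imOn f B ⊆ B')) := by
  simp only [ncard_le_one_iff_subsingleton]
  exact ⟨fun hf => ⟨hf.1, fun B hB => (em _).imp id (hf.block_of_not_subsingleton hpT hB)⟩,
    fun ⟨hdom, hblocks⟩ => morphism_of_blocks hdom hblocks⟩

theorem stmt7 {S T : Type*} [Fintype S] [Fintype T]
    (LS : Set (Set S)) (LT : Set (Set T))
    (hbS : ∀ B ∈ LS, 2 ≤ B.ncard)
    (hpS : ∀ x y : S, x ≠ y → ∃! B, B ∈ LS ∧ x ∈ B ∧ y ∈ B)
    (hbT : ∀ B ∈ LT, 2 ≤ B.ncard)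
    (hpT : ∀ x y : T, x ≠ y → ∃! B, B ∈ LT ∧ x ∈ B ∧ y ∈ B)
    (f : S → Option T) :
    Morphism LS LT f ↔
      (IsOpenSet LS (pDom f) ∧
        ∀ B ∈ LS,
          (imOn f B).ncard ≤ 1 ∨
          (B ⊆ pDom f ∧ (∀ x ∈ B, ∀ y ∈ B, f x = f y → x = y) ∧
            ∃ B' ∈ LT, imOn f B ⊆ B')) :=
  stmt7_general LS LT hpT f
end

section
/- Let X be a (v, k, 1)-BIBD with k ≥ 2. If X has a proper subsystem of order u < v, then v ≥ (k−1)u + 1. In particular, for a Steiner triple system (k = 3), v ≥ 2u + 1. -/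
/-! Through a point `p` outside the subsystem `X`, the blocks joining `p` to the points of `X`
are distinct, since each meets `X` in a single point. Having only `p` in common, they cover
`|X| (k - 1)` points other than `p`, whence `|X| (k - 1) ≤ v - 1`. -/

theorem Finset.card_mul_pred_le_of_pairwise_inter_subset {V ι : Type*} [Fintype V]
    [DecidableEq V] (s : Finset ι) (b : ι → Finset V) (p : V) (k : ℕ)
    (hp : ∀ i ∈ s, p ∈ b i) (hcard : ∀ i ∈ s, (b i).card = k)
    (hinter : (s : Set ι).Pairwise fun i j => b i ∩ b j ⊆ {p}) :
    s.card * (k - 1) ≤ Fintype.card V - 1 := by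
  have hdisj : (s : Set ι).PairwiseDisjoint fun i => (b i).erase p := by
    intro i hi j hj hij
    refine Finset.disjoint_left.mpr fun q hqi hqj => (Finset.mem_erase.mp hqi).1 ?_
    exact Finset.mem_singleton.mp <| hinter hi hj hij <|
      Finset.mem_inter.mpr ⟨Finset.mem_of_mem_erase hqi, Finset.mem_of_mem_erase hqj⟩
  calc s.card * (k - 1) = (s.biUnion fun i => (b i).erase p).card := by
        rw [Finset.card_biUnion hdisj, Finset.sum_const_nat]
        intro i hi
        rw [Finset.card_erase_of_mem (hp i hi), hcard i hi]
    _ ≤ (Finset.univ.erase p).card :=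
        Finset.card_le_card fun q hq => by
          obtain ⟨i, -, hqi⟩ := Finset.mem_biUnion.mp hq
          exact Finset.mem_erase.mpr ⟨Finset.ne_of_mem_erase hqi, Finset.mem_univ q⟩
    _ = Fintype.card V - 1 := Finset.card_erase_of_mem (Finset.mem_univ p)

theorem Subsys.eq_of_mem_block_of_not_mem {V : Type*} {L : Set (Set V)} {X : Set V}
    (hX : Subsys L X) {p : V} (hp : p ∉ X) {B : Set V} (hB : B ∈ L) (hpB : p ∈ B) {x y : V}
    (hx : x ∈ X) (hxB : x ∈ B) (hy : y ∈ X) (hyB : y ∈ B) : y = x := by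
  by_contra hyx
  exact hp (hX y hy x hx hyx B hB hyB hxB hpB)

theorem stmt12_general {V : Type*} [Fintype V] (L : Set (Set V)) (k : ℕ)
    (hsize : ∀ B ∈ L, B.ncard = k)
    (hpair : ∀ x y : V, x ≠ y → ∃! B, B ∈ L ∧ x ∈ B ∧ y ∈ B)
    (X : Set V) (hX : Subsys L X) (hlt : X.ncard < Fintype.card V) :
    (k - 1) * X.ncard + 1 ≤ Fintype.card V := by
  classical
  obtain ⟨p, hp⟩ : ∃ p, p ∉ X := by
    by_contra! hall
    rw [Set.eq_univ_of_forall hall, Set.ncard_univ, Nat.card_eq_fintype_card] at hlt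
    exact lt_irrefl _ hlt
  choose b hbL hbx hbp using fun x : X => (hpair x p (ne_of_mem_of_not_mem x.2 hp)).exists
  have hinter : ((Finset.univ : Finset X) : Set X).Pairwise
      (fun x y => (b x).toFinset ∩ (b y).toFinset ⊆ {p}) := by
    rintro x - y - hxy q hq
    simp only [Finset.mem_inter, Set.mem_toFinset] at hq
    by_contra hqp
    have hbxy : b x = b y := (hpair q p (Finset.mem_singleton.not.mp hqp)).unique
      ⟨hbL x, hq.1, hbp x⟩ ⟨hbL y, hq.2, hbp y⟩
    exact hxy (Subtype.ext (hX.eq_of_mem_block_of_not_mem hp (hbL x) (hbp x) x.2 (hbx x) y.2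
      (hbxy ▸ hbx y)).symm)
  have hcount := Finset.card_mul_pred_le_of_pairwise_inter_subset Finset.univ
    (fun x => (b x).toFinset) p k (fun x _ => Set.mem_toFinset.mpr (hbp x))
    (fun x _ => by rw [← Set.ncard_eq_toFinset_card', hsize _ (hbL x)]) hinter
  rw [Finset.card_univ, ← Nat.card_eq_fintype_card, Nat.card_coe_set_eq] at hcount
  have hV : 0 < Fintype.card V := Fintype.card_pos_iff.mpr ⟨p⟩
  rw [mul_comm]
  omega

theorem stmt12 {V : Type*} [Fintype V] (L : Set (Set V)) (k : ℕ) (hk : 2 ≤ k)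
    (hsize : ∀ B ∈ L, B.ncard = k)
    (hpair : ∀ x y : V, x ≠ y → ∃! B, B ∈ L ∧ x ∈ B ∧ y ∈ B)
    (X : Set V) (hX : Subsys L X) (hlt : X.ncard < Fintype.card V) :
    (k - 1) * X.ncard + 1 ≤ Fintype.card V :=
  stmt12_general L k hsize hpair X hX hlt
end

section
/- Let l ≥ 3, d ≥ 1, and M(l,d) the PBD on V = {1,...,l+d} with blocks L = {1,...,l} and all 2-element subsets {i,j} with l+1 ≤ j ≤ l+d and i < j. Let f : V → V be a partial function. If L ⊄ Dom(f), then f belongs to the Wilson monoid W(l,d) if and only if Dom(f) is open and |f(L ∩ Dom(f))| ≤ 1. If L ⊆ Dom(f), then f ∈ W(l,d) if and only if |f(L)| = 1 or f restricted to L is a permutation of L. -/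
/-- The blocks of the PBD `M(l,d)`: the set `L` of size `l`, together with all
two-element sets having at least one point outside `L` (these are exactly the
pairs `{i, j}` with `l + 1 ≤ j ≤ l + d`, `i < j`). -/
def MldBlocks {V : Type*} (L : Set V) : Set (Set V) :=
  {L} ∪ {B | ∃ x y : V, x ≠ y ∧ (x ∉ L ∨ y ∉ L) ∧ B = {x, y}}

/-- The open sets of `M(l,d)`: subsets of `D = Lᶜ`, and sets containing at
least `l - 1` points of `L`. -/
def OpenMld {V : Type*} (L : Set V) (l : ℕ) (X : Set V) : Prop :=
  X ⊆ Lᶜ ∨ l - 1 ≤ (L ∩ X).ncard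

/-- The restriction of the partial function `f` to `L` is a permutation of `L`. -/
def PermOnL {V : Type*} (L : Set V) (f : V → Option V) : Prop :=
  (∀ x ∈ L, ∃ y ∈ L, f x = some y) ∧
  (∀ x ∈ L, ∀ y ∈ L, f x = f y → x = y) ∧
  (∀ y ∈ L, ∃ x ∈ L, f x = some y)

/-- Membership in the Wilson monoid `W(l,d)`: open domain, and for every block
either the image has at most one point, or the block is mapped injectively
into a block. -/
def MemW {V : Type*} (L : Set V) (l : ℕ) (f : V → Option V) : Prop :=
  OpenMld L l (pDom f) ∧
    ∀ B ∈ MldBlocks L,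
      (imOn f B).ncard ≤ 1 ∨
      (B ⊆ pDom f ∧ (∀ x ∈ B, ∀ y ∈ B, f x = f y → x = y) ∧
        ∃ B' ∈ MldBlocks L, imOn f B ⊆ B')

/-!
A partial map defined on both points of a two-element block either takes a single value there or
maps the block injectively onto a pair, and every pair lies in a block; so every two-element block
satisfies the Wilson condition, and membership in `W(l,d)` only constrains the domain and the long
block `L`. When `L ⊆ Dom f` the domain is automatically open, and an injective image of `L` has
`l ≥ 3` points, so it can only lie in the block `L` itself, which it then fills by counting.
-/

section WilsonMonoid

variable {V : Type*}

def WilsonBlockCond (L : Set V) (f : V → Option V) (B : Set V) : Prop :=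
  (imOn f B).ncard ≤ 1 ∨
    (B ⊆ pDom f ∧ (∀ x ∈ B, ∀ y ∈ B, f x = f y → x = y) ∧
      ∃ B' ∈ MldBlocks L, imOn f B ⊆ B')

lemma imOn_eq_preimage_image (f : V → Option V) (B : Set V) :
    imOn f B = some ⁻¹' (f '' B) := rfl

lemma imOn_finite (f : V → Option V) {B : Set V} (hB : B.Finite) : (imOn f B).Finite := by
  rw [imOn_eq_preimage_image]
  exact (hB.image f).preimage (Option.some_injective V).injOn

lemma image_subset_range_some {f : V → Option V} {B : Set V} (hB : B ⊆ pDom f) :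
    f '' B ⊆ Set.range some := by
  rintro _ ⟨x, hx, rfl⟩
  exact Option.ne_none_iff_exists.1 (hB hx)

lemma ncard_imOn_of_injOn {f : V → Option V} {B : Set V} (hB : B ⊆ pDom f)
    (hinj : ∀ x ∈ B, ∀ y ∈ B, f x = f y → x = y) : (imOn f B).ncard = B.ncard := by
  rw [imOn_eq_preimage_image, Set.ncard_preimage_of_injective_subset_range
    (Option.some_injective V) (image_subset_range_some hB),
    Set.InjOn.ncard_image fun x hx y hy => hinj x hx y hy]

lemma imOn_nonempty {f : V → Option V} {B : Set V} (hB : B ⊆ pDom f) (hne : B.Nonempty) :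
    (imOn f B).Nonempty := by
  obtain ⟨x, hx⟩ := hne
  obtain ⟨y, hy⟩ := Option.ne_none_iff_exists.1 (hB hx)
  exact ⟨y, x, hx, hy.symm⟩

lemma imOn_pair {f : V → Option V} {x y a b : V} (ha : f x = some a) (hb : f y = some b) :
    imOn f {x, y} = {a, b} := by
  ext c
  simp [imOn, ha, hb, eq_comm]

lemma exists_mldBlocks_superset_pair (L : Set V) {a b : V} (hab : a ≠ b) :
    ∃ B ∈ MldBlocks L, ({a, b} : Set V) ⊆ B := by
  by_cases hL : a ∈ L ∧ b ∈ L
  · exact ⟨L, Or.inl rfl, Set.insert_subset hL.1 (Set.singleton_subset_iff.2 hL.2)⟩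
  · exact ⟨{a, b}, Or.inr ⟨a, b, hab, not_and_or.1 hL, rfl⟩, subset_rfl⟩

lemma wilsonBlockCond_pair (L : Set V) (f : V → Option V) (x y : V) :
    WilsonBlockCond L f {x, y} := by
  by_cases hval : ∃ a b, f x = some a ∧ f y = some b ∧ a ≠ b
  · obtain ⟨a, b, ha, hb, hab⟩ := hval
    refine Or.inr ⟨?_, ?_, ?_⟩
    · rintro u (rfl | rfl) <;> simp [pDom, ha, hb]
    · rintro u (rfl | rfl) v (rfl | rfl) huv <;> simp_all
    · rw [imOn_pair ha hb]
      exact exists_mldBlocks_superset_pair L hab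
  · push Not at hval
    have hsub : (imOn f {x, y}).Subsingleton := by
      rintro c ⟨u, hu, hc⟩ c' ⟨u', hu', hc'⟩
      rcases hu with rfl | rfl <;> rcases hu' with rfl | rfl
      · exact Option.some_injective V (hc.symm.trans hc')
      · exact hval c c' hc hc'
      · exact (hval c' c hc' hc).symm
      · exact Option.some_injective V (hc.symm.trans hc')
    have := hsub.finite.to_subtype
    exact Or.inl (Set.ncard_le_one_iff_subsingleton.2 hsub)

lemma memW_iff_wilsonBlockCond (L : Set V) (l : ℕ) (f : V → Option V) :
    MemW L l f ↔ OpenMld L l (pDom f) ∧ WilsonBlockCond L f L := by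
  refine ⟨fun ⟨hopen, hblocks⟩ => ⟨hopen, hblocks L (Or.inl rfl)⟩, ?_⟩
  rintro ⟨hopen, hL⟩
  refine ⟨hopen, ?_⟩
  rintro B (rfl | ⟨x, y, -, -, rfl⟩)
  · exact hL
  · exact wilsonBlockCond_pair L f x y

lemma openMld_of_subset_pDom {L : Set V} {l : ℕ} {f : V → Option V} (hL : L.ncard = l)
    (hsub : L ⊆ pDom f) : OpenMld L l (pDom f) :=
  Or.inr (by rw [Set.inter_eq_self_of_subset_left hsub, hL]; exact Nat.sub_le l 1)

lemma permOnL_iff (L : Set V) (f : V → Option V) :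
    PermOnL L f ↔
      L ⊆ pDom f ∧ (∀ x ∈ L, ∀ y ∈ L, f x = f y → x = y) ∧ imOn f L = L := by
  constructor
  · rintro ⟨hmaps, hinj, hsurj⟩
    refine ⟨fun x hx => ?_, hinj, subset_antisymm ?_ hsurj⟩
    · obtain ⟨y, -, hy⟩ := hmaps x hx
      simp [pDom, hy]
    · rintro y ⟨x, hx, hxy⟩
      obtain ⟨z, hz, hxz⟩ := hmaps x hx
      rwa [Option.some_injective V (hxy.symm.trans hxz)]
  · rintro ⟨hsub, hinj, him⟩
    refine ⟨fun x hx => ?_, hinj, fun y hy => ?_⟩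
    · obtain ⟨y, hy⟩ := Option.ne_none_iff_exists.1 (hsub hx)
      exact ⟨y, him ▸ ⟨x, hx, hy.symm⟩, hy.symm⟩
    · rwa [← him] at hy

lemma wilsonBlockCond_self_iff {L : Set V} {f : V → Option V} (hL : 3 ≤ L.ncard)
    (hsub : L ⊆ pDom f) :
    WilsonBlockCond L f L ↔ (imOn f L).ncard = 1 ∨ PermOnL L f := by
  have hLfin : L.Finite := Set.finite_of_ncard_pos (by omega)
  rw [permOnL_iff]
  constructor
  · rintro (hle | ⟨-, hinj, B, hB, him⟩)
    · have hpos : 0 < (imOn f L).ncard := (Set.ncard_pos (imOn_finite f hLfin)).2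
        (imOn_nonempty hsub (Set.nonempty_of_ncard_ne_zero (by omega)))
      exact Or.inl (by omega)
    · have hcard : (imOn f L).ncard = L.ncard := ncard_imOn_of_injOn hsub hinj
      rcases hB with rfl | ⟨x, y, hxy, -, rfl⟩
      · exact Or.inr ⟨hsub, hinj, Set.eq_of_subset_of_ncard_le him hcard.ge hLfin⟩
      · have hle : (imOn f L).ncard ≤ ({x, y} : Set V).ncard := Set.ncard_le_ncard him
        rw [Set.ncard_pair hxy] at hle
        omega
  · rintro (hone | ⟨-, hinj, him⟩)
    · exact Or.inl hone.le
    · exact Or.inr ⟨hsub, hinj, L, Or.inl rfl, him.subset⟩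

end WilsonMonoid

theorem stmt15_general {V : Type*} (l : ℕ) (hl : 3 ≤ l)
    (L : Set V) (hL : L.ncard = l)
    (f : V → Option V) :
    (¬L ⊆ pDom f →
      (MemW L l f ↔ (OpenMld L l (pDom f) ∧ (imOn f L).ncard ≤ 1))) ∧
    (L ⊆ pDom f →
      (MemW L l f ↔ ((imOn f L).ncard = 1 ∨ PermOnL L f))) := by
  refine ⟨fun hnsub => ?_, fun hsub => ?_⟩
  · rw [memW_iff_wilsonBlockCond, WilsonBlockCond]
    exact and_congr_right fun _ => or_iff_left fun h => hnsub h.1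
  · rw [memW_iff_wilsonBlockCond, wilsonBlockCond_self_iff (hL ▸ hl) hsub]
    exact and_iff_right (openMld_of_subset_pDom hL hsub)

theorem stmt15 {V : Type*} [Fintype V] (l d : ℕ) (hl : 3 ≤ l) (hd : 1 ≤ d)
    (hcard : Fintype.card V = l + d) (L : Set V) (hL : L.ncard = l)
    (f : V → Option V) :
    (¬L ⊆ pDom f →
      (MemW L l f ↔ (OpenMld L l (pDom f) ∧ (imOn f L).ncard ≤ 1))) ∧
    (L ⊆ pDom f →
      (MemW L l f ↔ ((imOn f L).ncard = 1 ∨ PermOnL L f))) :=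
  stmt15_general l hl L hL f
end
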